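/- Assume Hypotheses 1 and 2 and let U_0 : O_d → ℝ^d be continuous. Then every C^1 classical solution of the time-dependent master equation with initial datum U_0 is a monotone solution of the time-dependent master equation with initial datum U_0. -/

import Mathlib

open scoped RealInnerProductSpace
noncomputable section

/-- `ℝ^d` with the Euclidean inner product. -/
abbrev Euc (d : ℕ) := EuclideanSpace ℝ (Fin d)

/-- The positive orthant `O_d = (ℝ≥0)^d`. -/
def Od (d : ℕ) : Set (Euc d) := {x | ∀ i, 0 ≤ x i}

/-- `B_R = {x ∈ O_d : x_1 + ... + x_d ≤ R}`. -/
def Ball1 (d : ℕ) (R : ℝ) : Set (Euc d) := {x | x ∈ Od d ∧ ∑ i, x i ≤ R}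

/-- Classical solution of the time dependent master equation with initial datum `U₀`. -/
def IsClassicalSolTD (d : ℕ) (F G : Euc d → Euc d → Euc d) (lam : ℝ)
    (T : Euc d →L[ℝ] Euc d) (U₀ : Euc d → Euc d) (U : ℝ → Euc d → Euc d) : Prop :=
  ContDiff ℝ 1 (fun q : ℝ × Euc d => U q.1 q.2) ∧
  (∀ x ∈ Od d, U 0 x = U₀ x) ∧
  ∀ t > (0:ℝ), ∀ x ∈ Od d, ∀ i,
    deriv (fun s : ℝ => U s x i) t
      + fderiv ℝ (fun z : Euc d => U t z i) x (F x (U t x))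
      + lam * (U t x i - ContinuousLinearMap.adjoint T (U t (T x)) i)
      = G x (U t x) i

/-- The defining inequality of a monotone solution of the time-dependent master equation with
data `(F, G)` and threshold `R₁` (Definition 2.2). -/
def MonSolPropTD (d : ℕ) (F G : Euc d → Euc d → Euc d) (lam : ℝ)
    (T : Euc d →L[ℝ] Euc d) (R₁ : ℝ) (U : ℝ → Euc d → Euc d) : Prop :=
  ∀ R ≥ R₁, ∀ V : Euc d, ∀ y ∈ Od d, ∀ t₀ > (0:ℝ), ∀ x₀ ∈ Ball1 d R,
    (∀ x ∈ Ball1 d R, x ≠ x₀ → ⟪U t₀ x₀ - V, x₀ - y⟫ < ⟪U t₀ x - V, x - y⟫) →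
    ∀ φ : ℝ → ℝ, ContDiff ℝ 1 φ →
      (∃ ε > (0:ℝ), ∀ t ∈ Set.Ioo (t₀ - ε) t₀, φ t < ⟪U t x₀, x₀ - y⟫) →
      φ t₀ = ⟪U t₀ x₀, x₀ - y⟫ →
      ⟪F x₀ (U t₀ x₀), U t₀ x₀ - V⟫ + ⟪G x₀ (U t₀ x₀), x₀ - y⟫ ≤
        deriv φ t₀
          + lam * ⟪U t₀ x₀ - ContinuousLinearMap.adjoint T (U t₀ (T x₀)), x₀ - y⟫

/-- Monotone solution of the time-dependent master equation with initial datum `U₀`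
(Definition 2.2), with threshold `R₁ ≥ R₀` where `R₀` is the constant of Hypothesis 2. -/
def IsMonotoneSolTD (d : ℕ) (F G : Euc d → Euc d → Euc d) (lam : ℝ)
    (T : Euc d →L[ℝ] Euc d) (U₀ : Euc d → Euc d) (R₀ : ℝ) (U : ℝ → Euc d → Euc d) : Prop :=
  ContinuousOn (fun q : ℝ × Euc d => U q.1 q.2) (Set.Ici 0 ×ˢ Od d) ∧
  (∀ x ∈ Od d, U 0 x = U₀ x) ∧
  ∃ R₁ ≥ R₀, MonSolPropTD d F G lam T R₁ U

/-! At a point `x₀` where `x ↦ ⟪U t₀ x - V, x - y⟫` is minimal on `B_R`, Hypotheses 1 and 2 make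
`-F(x₀, U(t₀, x₀))` point into `B_R`, so the derivative of this function in that direction is
nonnegative. Since `φ` touches `t ↦ ⟪U t x₀, x₀ - y⟫` from below on the left of `t₀`, the time
derivative of the latter is at most `φ'(t₀)`. Pairing the master equation at `(t₀, x₀)` with
`x₀ - y` and adding the two inequalities gives the defining inequality of a monotone solution. -/

open Filter Topology Set

lemma eventually_add_mul_le {a b c : ℝ} (ha : a ≤ c) (hb : a = c → b ≤ 0) :
    ∀ᶠ s in 𝓝[>] (0 : ℝ), a + s * b ≤ c := by
  rcases ha.lt_or_eq with hlt | heq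
  · have hcont : Tendsto (fun s : ℝ => a + s * b) (𝓝 0) (𝓝 (a + 0 * b)) :=
      tendsto_const_nhds.add (tendsto_id.mul_const b)
    rw [zero_mul, add_zero] at hcont
    exact nhdsWithin_le_nhds ((hcont.eventually (gt_mem_nhds hlt)).mono fun _ h => h.le)
  · filter_upwards [self_mem_nhdsWithin] with s hs
    nlinarith [hb heq, mem_Ioi.1 hs]

lemma mem_posTangentConeAt_ball1 {d : ℕ} {R : ℝ} {x w : Euc d} (hx : x ∈ Ball1 d R)
    (hface : ∀ i, x i = 0 → 0 ≤ w i) (hsum : ∑ i, x i = R → ∑ i, w i ≤ 0) :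
    w ∈ posTangentConeAt (Ball1 d R) x := by
  refine mem_posTangentConeAt_of_frequently_mem (Eventually.frequently ?_)
  have hcoord : ∀ i, ∀ᶠ s in 𝓝[>] (0 : ℝ), 0 ≤ (x + s • w) i := fun i => by
    filter_upwards [eventually_add_mul_le (a := -x i) (b := -w i) (c := 0)
      (by linarith [hx.1 i]) (fun h => by linarith [hface i (by linarith)])] with s hs
    simp only [PiLp.add_apply, PiLp.smul_apply, smul_eq_mul]
    linarith
  have hsum' : ∀ᶠ s in 𝓝[>] (0 : ℝ), ∑ i, (x + s • w) i ≤ R := by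
    simpa [Finset.sum_add_distrib, ← Finset.mul_sum] using eventually_add_mul_le hx.2 hsum
  filter_upwards [eventually_all.2 hcoord, hsum'] with s h1 h2
  exact ⟨h1, h2⟩

section InnerProductSpace

variable {E : Type*} [NormedAddCommGroup E] [InnerProductSpace ℝ E]

theorem IsMinOn.inner_fderiv_add_inner_nonneg {W : E → E} {s : Set E} {x₀ V y w : E}
    (hW : DifferentiableAt ℝ W x₀) (hmin : IsMinOn (fun x => ⟪W x - V, x - y⟫) s x₀)
    (hw : w ∈ posTangentConeAt s x₀) :
    0 ≤ ⟪fderiv ℝ W x₀ w, x₀ - y⟫ + ⟪W x₀ - V, w⟫ := by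
  have hderiv := (hW.hasFDerivAt.sub_const V).inner ℝ ((hasFDerivAt_id x₀).sub_const y)
  simpa [add_comm] using hmin.localize.hasFDerivWithinAt_nonneg hderiv.hasFDerivWithinAt hw

theorem inner_deriv_le_deriv_of_eventually_lt {γ : ℝ → E} {φ : ℝ → ℝ} {t₀ : ℝ} {e : E}
    (hγ : DifferentiableAt ℝ γ t₀) (hφ : DifferentiableAt ℝ φ t₀)
    (hlt : ∀ᶠ t in 𝓝[<] t₀, φ t < ⟪γ t, e⟫) (heq : φ t₀ = ⟪γ t₀, e⟫) :
    ⟪deriv γ t₀, e⟫ ≤ deriv φ t₀ := by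
  have hψ := (hγ.hasDerivAt.inner ℝ (hasDerivAt_const t₀ e)).sub hφ.hasDerivAt
  have hmin : IsLocalMinOn (fun t => ⟪γ t, e⟫ - φ t) (Iio t₀) t₀ :=
    hlt.mono fun t ht => by simp only [heq, sub_self]; linarith
  have hdir : (-1 : ℝ) ∈ posTangentConeAt (Iio t₀) t₀ :=
    mem_posTangentConeAt_of_frequently_mem (Eventually.frequently
      (eventually_mem_nhdsWithin.mono fun s hs => by simpa using mem_Ioi.1 hs))
  have hslope := hmin.hasFDerivWithinAt_nonneg hψ.hasFDerivAt.hasFDerivWithinAt hdir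
  simp only [inner_zero_right, zero_add, ContinuousLinearMap.toSpanSingleton_apply, smul_eq_mul,
    neg_mul, one_mul, neg_sub, sub_nonneg] at hslope
  linarith

end InnerProductSpace

section MasterEquation

variable {d : ℕ} {F G : Euc d → Euc d → Euc d} {lam : ℝ} {T : Euc d →L[ℝ] Euc d}
  {U₀ : Euc d → Euc d} {U : ℝ → Euc d → Euc d}

lemma IsClassicalSolTD.differentiableAt_time (hU : IsClassicalSolTD d F G lam T U₀ U)
    (t : ℝ) (x : Euc d) : DifferentiableAt ℝ (fun s => U s x) t :=
  ((hU.1.differentiable one_ne_zero).comp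
    (differentiable_id.prodMk (differentiable_const x))).differentiableAt (x := t)

lemma IsClassicalSolTD.differentiableAt_space (hU : IsClassicalSolTD d F G lam T U₀ U)
    (t : ℝ) (x : Euc d) : DifferentiableAt ℝ (fun z => U t z) x :=
  ((hU.1.differentiable one_ne_zero).comp
    ((differentiable_const t).prodMk differentiable_id)).differentiableAt (x := x)

lemma IsClassicalSolTD.master_eq (hU : IsClassicalSolTD d F G lam T U₀ U) {t : ℝ} (ht : 0 < t)
    {x : Euc d} (hx : x ∈ Od d) :
    deriv (fun s => U s x) t + fderiv ℝ (fun z => U t z) x (F x (U t x))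
      + lam • (U t x - ContinuousLinearMap.adjoint T (U t (T x))) = G x (U t x) := by
  ext i
  have hcoord_t : deriv (fun s => U s x i) t = deriv (fun s => U s x) t i :=
    ((EuclideanSpace.proj (𝕜 := ℝ) (ι := Fin d) i).hasFDerivAt.comp_hasDerivAt t
      (hU.differentiableAt_time t x).hasDerivAt).deriv
  have hcoord_x : fderiv ℝ (fun z => U t z i) x
      = (EuclideanSpace.proj i).comp (fderiv ℝ (fun z => U t z) x) :=
    ((EuclideanSpace.proj (𝕜 := ℝ) (ι := Fin d) i).hasFDerivAt.comp x
      (hU.differentiableAt_space t x).hasFDerivAt).fderiv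
  simpa [hcoord_t, hcoord_x] using hU.2.2 t ht x hx i

end MasterEquation

theorem classical_implies_monotone_time_dependent_general
    (d : ℕ)
    (F G : Euc d → Euc d → Euc d)
    (lam : ℝ) (T : Euc d →L[ℝ] Euc d)
    -- Hypothesis 1
    (hyp1F : ∀ x ∈ Od d, ∀ p : Euc d, ∀ i, x i = 0 → F x p i ≤ 0)
    -- Hypothesis 2
    (R₀ : ℝ)
    (hyp2F : ∀ x ∈ Od d, ∀ p : Euc d, R₀ ≤ ∑ i, x i → 0 ≤ ∑ i, F x p i)
    -- initial datum
    (U₀ : Euc d → Euc d)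
    (U : ℝ → Euc d → Euc d) (hU : IsClassicalSolTD d F G lam T U₀ U) :
    IsMonotoneSolTD d F G lam T U₀ R₀ U := by
  refine ⟨hU.1.continuous.continuousOn, hU.2.1, R₀, le_rfl, ?_⟩
  intro R hR V y _ t₀ ht₀ x₀ hx₀ hmin φ hφ ⟨ε, hε, hφlt⟩ hφeq
  set f := F x₀ (U t₀ x₀)
  have htime : ⟪deriv (fun s => U s x₀) t₀, x₀ - y⟫ ≤ deriv φ t₀ :=
    inner_deriv_le_deriv_of_eventually_lt (hU.differentiableAt_time t₀ x₀)
      (hφ.differentiable one_ne_zero t₀)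
      (eventually_of_mem (Ioo_mem_nhdsLT (show t₀ - ε < t₀ by linarith)) hφlt) hφeq
  have hinward : -f ∈ posTangentConeAt (Ball1 d R) x₀ :=
    mem_posTangentConeAt_ball1 hx₀
      (fun i hi => by simpa using hyp1F x₀ hx₀.1 _ i hi)
      (fun hsum => by simpa using hyp2F x₀ hx₀.1 _ (hsum ▸ hR))
  have hmin' : IsMinOn (fun x => ⟪U t₀ x - V, x - y⟫) (Ball1 d R) x₀ :=
    isMinOn_iff.2 fun x hx => by
      rcases eq_or_ne x x₀ with rfl | hne
      · exact le_rfl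
      · exact (hmin x hx hne).le
  have hspace := hmin'.inner_fderiv_add_inner_nonneg (hU.differentiableAt_space t₀ x₀) hinward
  have heq := congrArg (⟪·, x₀ - y⟫) (hU.master_eq ht₀ hx₀.1)
  simp only [inner_add_left, inner_smul_left, map_neg, inner_neg_left, inner_neg_right,
    RCLike.conj_to_real] at heq hspace
  rw [real_inner_comm]
  linarith

/-- Proposition 2.4 (first part): under Hypotheses 1 and 2, every C¹ classical solution of the
time-dependent master equation is a monotone solution of it. -/
theorem classical_implies_monotone_time_dependent
    (d : ℕ) (hd : 1 ≤ d)
    (F G : Euc d → Euc d → Euc d)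
    (hFc : Continuous fun q : Euc d × Euc d => F q.1 q.2)
    (hGc : Continuous fun q : Euc d × Euc d => G q.1 q.2)
    (lam : ℝ) (hlam : 0 ≤ lam) (T : Euc d →L[ℝ] Euc d)
    -- Hypothesis 1
    (hyp1F : ∀ x ∈ Od d, ∀ p : Euc d, ∀ i, x i = 0 → F x p i ≤ 0)
    (hyp1T : ∀ x ∈ Od d, T x ∈ Od d)
    -- Hypothesis 2
    (R₀ : ℝ) (hR₀ : 0 < R₀)
    (hyp2F : ∀ x ∈ Od d, ∀ p : Euc d, R₀ ≤ ∑ i, x i → 0 ≤ ∑ i, F x p i)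
    (hyp2T : ∀ R ≥ R₀, ∀ x ∈ Ball1 d R, T x ∈ Ball1 d R)
    -- initial datum
    (U₀ : Euc d → Euc d) (hU₀c : ContinuousOn U₀ (Od d))
    (U : ℝ → Euc d → Euc d) (hU : IsClassicalSolTD d F G lam T U₀ U) :
    IsMonotoneSolTD d F G lam T U₀ R₀ U :=
  classical_implies_monotone_time_dependent_general d F G lam T hyp1F R₀ hyp2F U₀ U hU
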